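/- arXiv:1705.05062 — 2 statements merged into one kernel-verified Lean document; each statement's English description precedes it below -/
import Mathlib

section
/- Yang multiplication theorem for base sequences: If BS(m+1, m) ≠ ∅ and BS(n+1, n) ≠ ∅, then BS(m', m') ≠ ∅ where m' = (2m+1)(2n+1). -/
noncomputable section
open LaurentPolynomial Finset

variable {R : Type*}

/-- The Hall polynomial `φ_a(x) = Σ aᵢ xⁱ` of a sequence. -/
def hallPhi [CommRing R] {l : ℕ} (a : Fin l → R) : LaurentPolynomial R :=
  ∑ i, C (a i) * T (i : ℤ)

/-- `ψ_a(x) = x^{1-l} φ_a(x²) = Σ aᵢ x^{2i+1-l}`. -/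
def hallPsi [CommRing R] {l : ℕ} (a : Fin l → R) : LaurentPolynomial R :=
  ∑ i, C (a i) * T (2 * (i : ℤ) + 1 - l)

/-- Extension of an involution `σ` on `R` to Laurent polynomials, sending `x ↦ x⁻¹`. -/
def lstar [CommRing R] (σ : R →+* R) (f : LaurentPolynomial R) : LaurentPolynomial R :=
  AddMonoidAlgebra.ofCoeff (Finsupp.equivMapDomain (Equiv.neg ℤ) (Finsupp.mapRange σ σ.map_zero f.coeff))

/-- Non-periodic autocorrelation `N_a(j) = Σ_{i=0}^{l-j-1} aᵢ σ(a_{i+j})`. -/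
def autocorr [CommRing R] (σ : R → R) {l : ℕ} (a : Fin l → R) (j : ℕ) : R :=
  ∑ i : Fin l, if h : (i : ℕ) + j < l then a i * σ (a ⟨(i : ℕ) + j, h⟩) else 0

/-- Reversed conjugated sequence `a* = (σ a_{l-1},…,σ a₀)`. -/
def revSeq (σ : R → R) {l : ℕ} (a : Fin l → R) : Fin l → R :=
  fun i => σ (a i.rev)

/-- Substitution `x ↦ x²` on Laurent polynomials. -/
def subSq [CommRing R] : LaurentPolynomial R →+* LaurentPolynomial R :=
  AddMonoidAlgebra.mapDomainRingHom R ((2 : ℤ) • AddMonoidHom.id ℤ)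

/-- Laurent polynomials in two variables `x, y`. -/
abbrev Laurent2 (R : Type*) [CommRing R] := AddMonoidAlgebra R (ℤ × ℤ)

/-- A single-variable `ψ_a(x)` viewed in the two-variable ring. -/
def psiX [CommRing R] {l : ℕ} (a : Fin l → R) : Laurent2 R :=
  ∑ i : Fin l, AddMonoidAlgebra.single ((2 * (i : ℤ) + 1 - l, (0 : ℤ)) : ℤ × ℤ) (a i)

/-- A single-variable `ψ_a(y)` viewed in the two-variable ring. -/
def psiY [CommRing R] {l : ℕ} (a : Fin l → R) : Laurent2 R :=
  ∑ i : Fin l, AddMonoidAlgebra.single (((0 : ℤ), 2 * (i : ℤ) + 1 - l) : ℤ × ℤ) (a i)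

/-- `ψ_A(x,y) = Σᵢ ψ_{aᵢ}(x) y^{2i+1-m}` for a matrix `A` with rows `aᵢ`. -/
def psiMat [CommRing R] {m n : ℕ} (A : Fin m → Fin n → R) : Laurent2 R :=
  ∑ i : Fin m, psiX (A i) * AddMonoidAlgebra.single (((0 : ℤ), 2 * (i : ℤ) + 1 - m) : ℤ × ℤ) (1 : R)

/-- Involution on two-variable Laurent polynomials: `x ↦ x⁻¹`, `y ↦ y⁻¹`, `σ` on coefficients. -/
def lstar2 [CommRing R] (σ : R →+* R) (f : Laurent2 R) : Laurent2 R :=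
  AddMonoidAlgebra.ofCoeff (Finsupp.equivMapDomain (Equiv.neg (ℤ × ℤ)) (Finsupp.mapRange σ σ.map_zero f.coeff))

/-- Outer product matrix `(f^t a)_{ij} = fᵢ aⱼ`. -/
def outer [CommRing R] {m n : ℕ} (f : Fin m → R) (a : Fin n → R) : Fin m → Fin n → R :=
  fun i j => f i * a j

/-- Concatenation of the rows of a matrix. -/
def seqMat [CommRing R] {m n : ℕ} (A : Fin m → Fin n → R) : Fin (m * n) → R :=
  fun k =>
    A ⟨(k : ℕ) / n, Nat.div_lt_of_lt_mul (Nat.mul_comm m n ▸ k.isLt)⟩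
      ⟨(k : ℕ) % n, Nat.mod_lt _ (Nat.pos_of_ne_zero (by rintro rfl; exact absurd k.isLt (by simp)))⟩

/-- The substitution `y = xⁿ`, as an additive monoid hom on exponents. -/
def specHom (n : ℕ) : (ℤ × ℤ) →+ ℤ :=
  AddMonoidHom.fst ℤ ℤ + (n : ℤ) • AddMonoidHom.snd ℤ ℤ

/-- Substituting `y = xⁿ` in a two-variable Laurent polynomial. -/
def specialize [CommRing R] (n : ℕ) : Laurent2 R →+* LaurentPolynomial R :=
  AddMonoidAlgebra.mapDomainRingHom R (specHom n)

/-- `a/0 = (a₀,0,a₁,…,0,a_l)`, interleaving zeros (length `2l+1` from length `l+1`). -/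
def div0 [CommRing R] {l : ℕ} (a : Fin (l + 1) → R) : Fin (2 * l + 1) → R :=
  fun i => if h : (i : ℕ) % 2 = 0 then a ⟨(i : ℕ) / 2, by have := i.isLt; omega⟩ else 0

/-- `0/a = (0,a₀,0,…,a_{l-1},0)` (length `2l+1` from length `l`). -/
def zdiv [CommRing R] {l : ℕ} (a : Fin l → R) : Fin (2 * l + 1) → R :=
  fun i => if h : (i : ℕ) % 2 = 1 then a ⟨(i : ℕ) / 2, by have := i.isLt; omega⟩ else 0

/-- `a/0` for arbitrary length `l`, giving length `2l-1`. -/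
def interDiv0 [CommRing R] {l : ℕ} (a : Fin l → R) : Fin (2 * l - 1) → R :=
  fun i => if h : (i : ℕ) % 2 = 0 then a ⟨(i : ℕ) / 2, by have := i.isLt; omega⟩ else 0

/-- `0/a` for arbitrary length `l`, giving length `2l+1`. -/
def interZero [CommRing R] {l : ℕ} (a : Fin l → R) : Fin (2 * l + 1) → R :=
  fun i => if h : (i : ℕ) % 2 = 1 then a ⟨(i : ℕ) / 2, by have := i.isLt; omega⟩ else 0

/-- Substitution doubling all exponents, on two-variable Laurent polynomials. -/
def subSq2 [CommRing R] : Laurent2 R →+* Laurent2 R :=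
  AddMonoidAlgebra.mapDomainRingHom R ((2 : ℤ) • AddMonoidHom.id (ℤ × ℤ))


/-- Base sequences: four `±1`-sequences of lengths `p,p,q,q` whose non-periodic
autocorrelations sum to zero for every `j ≥ 1`. -/
def IsBaseSeq (p q : ℕ) (a b : Fin p → ℤ) (c d : Fin q → ℤ) : Prop :=
  (∀ i, a i = 1 ∨ a i = -1) ∧ (∀ i, b i = 1 ∨ b i = -1) ∧
  (∀ i, c i = 1 ∨ c i = -1) ∧ (∀ i, d i = 1 ∨ d i = -1) ∧
  ∀ j : ℕ, 1 ≤ j →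
    autocorr id a j + autocorr id b j + autocorr id c j + autocorr id d j = 0


/-! For a sequence `u` of length `l` let `ψ_u(x) = Σ uᵢ x^{2i+1-l}`. The coefficient of `x^{2j}` in
`ψ_u(x) ψ_u(x⁻¹)` is the autocorrelation `N_u(j)` and the odd coefficients vanish, so a quadruple
is a base sequence exactly when the sum of its four norms `ψ_u(x) ψ_u(x⁻¹)` is constant.
Yang's sequences are sums of Kronecker products `(P/0 or 0/P) ⊗ (S/0 or 0/S)` with disjoint
supports, so their `ψ` is `Σ ψ_{Pᵢ}(x^{2(2n+1)}) ψ_{Sᵢ}(x²)`. A quaternion-like identity, valid in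
any commutative ring with an involution, turns the sum of the four norms of Yang's sequences into
the product of the norms of the two given quadruples, which is constant. -/

namespace LaurentPolynomial

variable [CommSemiring R]

def expand (k : ℤ) : R[T;T⁻¹] →+* R[T;T⁻¹] :=
  AddMonoidAlgebra.mapDomainRingHom R (AddMonoidHom.mulLeft k)

theorem expand_C_mul_T (k n : ℤ) (r : R) : expand k (C r * T n) = C r * T (k * n) := by
  rw [← single_eq_C_mul_T, ← single_eq_C_mul_T]
  exact AddMonoidAlgebra.mapDomain_single

theorem expand_C (k : ℤ) (r : R) : expand k (C r) = C r := by
  simpa [T_zero] using expand_C_mul_T k 0 r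

theorem invert_expand (k : ℤ) (f : R[T;T⁻¹]) : invert (expand k f) = expand k (invert f) := by
  induction f using LaurentPolynomial.induction_on' with
  | add p q hp hq => simp only [map_add, hp, hq]
  | C_mul_T n r => simp [expand_C_mul_T]

theorem invert_mul_invert_self (f : R[T;T⁻¹]) : invert (f * invert f) = f * invert f := by
  rw [map_mul, involutive_invert, mul_comm]

theorem exists_eq_C_iff_coeff_two_mul_eq_zero {f : R[T;T⁻¹]} (hf : invert f = f)
    (hodd : ∀ k, Odd k → f.coeff k = 0) :
    (∃ c, f = C c) ↔ ∀ j : ℕ, 1 ≤ j → f.coeff (2 * j) = 0 := by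
  refine ⟨fun ⟨c, hc⟩ j hj => by simp [hc]; omega, fun h => ⟨f.coeff 0, ext fun k => ?_⟩⟩
  rw [C_apply]
  split_ifs with hk
  · rw [hk]
  have habs : f.coeff k = f.coeff |k| := by
    rcases abs_choice k with hk' | hk' <;> rw [hk']
    conv_lhs => rw [← hf, invert_apply]
  have hpos : 0 < |k| := abs_pos.mpr hk
  rw [habs]
  rcases Int.even_or_odd' |k| with ⟨j, hj | hj⟩
  · rw [hj, show j = (j.toNat : ℤ) by omega]
    exact h _ (by omega)
  · exact hodd _ ⟨j, hj⟩

end LaurentPolynomial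

section HallPolynomial

variable [CommRing R] {l p q : ℕ}

theorem hallPsi_add (u v : Fin l → R) : hallPsi (u + v) = hallPsi u + hallPsi v := by
  simp only [hallPsi, Pi.add_apply, map_add, add_mul, sum_add_distrib]

theorem hallPsi_neg (u : Fin l → R) : hallPsi (-u) = -hallPsi u := by
  simp only [hallPsi, Pi.neg_apply, map_neg, neg_mul, sum_neg_distrib]

theorem invert_hallPsi (u : Fin l → R) : invert (hallPsi u) = hallPsi (revSeq id u) := by
  rw [hallPsi, hallPsi, map_sum]
  refine Fintype.sum_equiv Fin.revPerm _ _ fun i => ?_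
  simp only [map_mul, invert_C, invert_T, revSeq, id, Fin.revPerm_apply, Fin.rev_rev,
    Fin.val_rev]
  congr 2
  have := i.isLt
  push_cast [Nat.sub_sub, Nat.cast_sub (by omega : (i : ℕ) + 1 ≤ l)]
  ring

theorem expand_hallPsi (k : ℤ) (u : Fin l → R) :
    expand k (hallPsi u) = ∑ i, C (u i) * T (k * (2 * (i : ℤ) + 1 - l)) := by
  simp only [hallPsi, map_sum, expand_C_mul_T]

theorem hallPsi_seqMat_outer (u : Fin p → R) (v : Fin q → R) :
    hallPsi (seqMat (outer u v)) = expand q (hallPsi u) * hallPsi v := by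
  rw [expand_hallPsi, hallPsi, hallPsi, sum_mul_sum, ← Fintype.sum_prod_type',
    ← finProdFinEquiv.sum_comp]
  refine sum_congr rfl fun ⟨i, j⟩ _ => ?_
  have hq : 0 < q := j.pos
  have hdiv : ((j : ℕ) + q * i) / q = i := by
    rw [Nat.add_mul_div_left _ _ hq, Nat.div_eq_of_lt j.isLt, zero_add]
  have hmod : ((j : ℕ) + q * i) % q = j := by
    rw [Nat.add_mul_mod_self_left, Nat.mod_eq_of_lt j.isLt]
  simp only [seqMat, outer, finProdFinEquiv_apply_val, hdiv, hmod]
  rw [mul_mul_mul_comm, ← map_mul, ← T_add]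
  congr 2
  push_cast
  ring

theorem hallPsi_div0 (a : Fin (l + 1) → R) : hallPsi (div0 a) = expand 2 (hallPsi a) := by
  rw [expand_hallPsi, hallPsi]
  symm
  refine sum_of_injOn (fun i => ⟨2 * i, by omega⟩) ?_ (by simp) ?_ ?_
  · intro i _ i' _ h
    simpa [Fin.ext_iff] using h
  · intro k _ hk
    have hodd : (k : ℕ) % 2 = 1 := by
      by_contra h
      exact hk ⟨⟨k / 2, by omega⟩, by simp, Fin.ext (by simp; omega)⟩
    simp [div0, hodd]
  · intro i _
    have hdiv : 2 * (i : ℕ) / 2 = i := by omega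
    simp only [div0, Nat.mul_mod_right, hdiv, dite_true]
    congr 2
    push_cast
    ring

theorem hallPsi_zdiv (a : Fin l → R) : hallPsi (zdiv a) = expand 2 (hallPsi a) := by
  rw [expand_hallPsi, hallPsi]
  symm
  refine sum_of_injOn (fun i => ⟨2 * i + 1, by omega⟩) ?_ (by simp) ?_ ?_
  · intro i _ i' _ h
    simpa [Fin.ext_iff] using h
  · intro k _ hk
    have heven : ¬(k : ℕ) % 2 = 1 := by
      intro h
      exact hk ⟨⟨k / 2, by omega⟩, by simp, Fin.ext (by simp; omega)⟩
    simp [zdiv, heven]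
  · intro i _
    have hdiv : (2 * (i : ℕ) + 1) / 2 = i := by omega
    simp only [zdiv, Nat.mul_add_mod_self_left, hdiv, dite_true]
    congr 2
    push_cast
    ring

def hallNorm (u : Fin l → R) : R[T;T⁻¹] := hallPsi u * invert (hallPsi u)

theorem invert_hallNorm (u : Fin l → R) : invert (hallNorm u) = hallNorm u :=
  invert_mul_invert_self _

theorem hallNorm_coeff (u : Fin l → R) (k : ℤ) :
    (hallNorm u).coeff k =
      ∑ i : Fin l, ∑ i' : Fin l, if 2 * (i : ℤ) - 2 * i' = k then u i * u i' else 0 := by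
  simp only [hallNorm, hallPsi, map_sum, map_mul, invert_C, invert_T, sum_mul_sum,
    AddMonoidAlgebra.coeff_sum, Finset.sum_apply']
  refine sum_congr rfl fun i _ => sum_congr rfl fun i' _ => ?_
  rw [mul_mul_mul_comm, ← map_mul, ← T_add, ← single_eq_C_mul_T, AddMonoidAlgebra.coeff_single,
    Finsupp.single_apply]
  exact if_congr (by constructor <;> intro h <;> omega) rfl rfl

theorem hallNorm_coeff_of_odd (u : Fin l → R) {k : ℤ} (hk : Odd k) : (hallNorm u).coeff k = 0 := by
  obtain ⟨r, rfl⟩ := hk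
  rw [hallNorm_coeff]
  exact sum_eq_zero fun i _ => sum_eq_zero fun i' _ => if_neg (by omega)

theorem hallNorm_coeff_two_mul (u : Fin l → R) (j : ℕ) :
    (hallNorm u).coeff (2 * j) = autocorr id u j := by
  rw [hallNorm_coeff, sum_comm, autocorr]
  refine sum_congr rfl fun i _ => ?_
  split_ifs with h
  · rw [sum_eq_single ⟨i + j, h⟩ (fun i' _ hi' => if_neg ?_) (by simp), if_pos (by simp; ring),
      mul_comm, id]
    contrapose hi'
    ext
    simp only
    omega
  · exact sum_eq_zero fun i' _ => if_neg (by have := i'.isLt; omega)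

theorem autocorr_sum_eq_zero_iff (a b : Fin p → R) (c d : Fin q → R) :
    (∀ j : ℕ, 1 ≤ j → autocorr id a j + autocorr id b j + autocorr id c j + autocorr id d j = 0)
      ↔ ∃ r, hallNorm a + hallNorm b + hallNorm c + hallNorm d = C r := by
  rw [exists_eq_C_iff_coeff_two_mul_eq_zero (by simp only [map_add, invert_hallNorm])
    fun k hk => by simp only [AddMonoidAlgebra.coeff_add, Finsupp.add_apply,
      hallNorm_coeff_of_odd _ hk, add_zero]]
  simp only [AddMonoidAlgebra.coeff_add, Finsupp.add_apply, hallNorm_coeff_two_mul]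

end HallPolynomial

section YangProduct

variable [CommRing R] {m n : ℕ}

theorem yang_identity (σ : R →+* R) (hσ : ∀ x, σ (σ x) = x) (a b c d e f g h : R) :
    let N := fun x => x * σ x
    N (a * e + b * g - c * σ f - σ d * σ h) + N (b * f - σ a * σ h - d * e + c * σ g) +
        N (σ b * e - σ a * g + σ d * f - c * h) + N (σ a * σ f + b * h + σ c * e + σ d * σ g) =
      (N a + N b + N c + N d) * (N e + N f + N g + N h) := by
  simp only [map_add, map_sub, map_mul, hσ]
  ring

def yangSeq (P₀ P₁ : Fin (m + 1) → R) (P₂ P₃ : Fin m → R) (S₀ : Fin (n + 1) → R) (S₁ : Fin n → R)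
    (S₂ : Fin (n + 1) → R) (S₃ : Fin n → R) : Fin ((2 * m + 1) * (2 * n + 1)) → R :=
  seqMat (outer (div0 P₀) (div0 S₀)) + seqMat (outer (div0 P₁) (zdiv S₁)) +
    seqMat (outer (zdiv P₂) (div0 S₂)) + seqMat (outer (zdiv P₃) (zdiv S₃))

theorem hallPsi_yangSeq (P₀ P₁ : Fin (m + 1) → R) (P₂ P₃ : Fin m → R) (S₀ : Fin (n + 1) → R)
    (S₁ : Fin n → R) (S₂ : Fin (n + 1) → R) (S₃ : Fin n → R) :
    let X := (expand (2 * n + 1 : ℕ)).comp (expand 2)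
    hallPsi (yangSeq P₀ P₁ P₂ P₃ S₀ S₁ S₂ S₃) =
      X (hallPsi P₀) * expand 2 (hallPsi S₀) + X (hallPsi P₁) * expand 2 (hallPsi S₁) +
        X (hallPsi P₂) * expand 2 (hallPsi S₂) + X (hallPsi P₃) * expand 2 (hallPsi S₃) := by
  simp only [yangSeq, hallPsi_add, hallPsi_seqMat_outer, hallPsi_div0, hallPsi_zdiv,
    RingHom.comp_apply]

theorem yangSeq_isUnit {P₀ P₁ : Fin (m + 1) → R} {P₂ P₃ : Fin m → R} {S₀ : Fin (n + 1) → R}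
    {S₁ : Fin n → R} {S₂ : Fin (n + 1) → R} {S₃ : Fin n → R}
    (hP₀ : ∀ i, IsUnit (P₀ i)) (hP₁ : ∀ i, IsUnit (P₁ i)) (hP₂ : ∀ i, IsUnit (P₂ i))
    (hP₃ : ∀ i, IsUnit (P₃ i)) (hS₀ : ∀ i, IsUnit (S₀ i)) (hS₁ : ∀ i, IsUnit (S₁ i))
    (hS₂ : ∀ i, IsUnit (S₂ i)) (hS₃ : ∀ i, IsUnit (S₃ i)) (k) :
    IsUnit (yangSeq P₀ P₁ P₂ P₃ S₀ S₁ S₂ S₃ k) := by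
  simp only [yangSeq, Pi.add_apply, seqMat, outer, div0, zdiv]
  rcases Nat.mod_two_eq_zero_or_one ((k : ℕ) / (2 * n + 1)) with hr | hr <;>
    rcases Nat.mod_two_eq_zero_or_one ((k : ℕ) % (2 * n + 1)) with hs | hs <;>
    simp [hr, hs, (hP₀ _).mul (hS₀ _), (hP₁ _).mul (hS₁ _), (hP₂ _).mul (hS₂ _),
      (hP₃ _).mul (hS₃ _)]

theorem hallNorm_yangSeq (a b : Fin (m + 1) → R) (c d : Fin m → R) (e f : Fin (n + 1) → R)
    (g h : Fin n → R) :
    let X := (expand (2 * n + 1 : ℕ)).comp (expand 2)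
    hallNorm (yangSeq a b c (revSeq id d) e g (-revSeq id f) (-revSeq id h)) +
        hallNorm (yangSeq b (revSeq id a) d c f (-revSeq id h) (-e) (revSeq id g)) +
        hallNorm (yangSeq (revSeq id b) (revSeq id a) (revSeq id d) c e (-g) f (-h)) +
        hallNorm (yangSeq (revSeq id a) b (revSeq id c) (revSeq id d) (revSeq id f) h e
          (revSeq id g)) =
      X (hallNorm a + hallNorm b + hallNorm c + hallNorm d) *
        expand 2 (hallNorm e + hallNorm f + hallNorm g + hallNorm h) := by
  intro X
  have hinv : ∀ x : R[T;T⁻¹], invert (invert x) = x := involutive_invert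
  have key := yang_identity (invert (R := R) : R[T;T⁻¹] →+* R[T;T⁻¹]) (fun x => hinv x)
    (X (hallPsi a)) (X (hallPsi b)) (X (hallPsi c)) (X (hallPsi d))
    (expand 2 (hallPsi e)) (expand 2 (hallPsi f)) (expand 2 (hallPsi g)) (expand 2 (hallPsi h))
  simp only [X, hallNorm, hallPsi_yangSeq, hallPsi_neg, ← invert_hallPsi, RingHom.comp_apply,
    RingHom.coe_coe, ← invert_expand, map_neg, map_add, map_sub, map_mul, hinv] at key ⊢
  linear_combination key

end YangProduct

theorem isBaseSeq_yangSeq {m n : ℕ} {a b : Fin (m + 1) → ℤ} {c d : Fin m → ℤ}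
    {e f : Fin (n + 1) → ℤ} {g h : Fin n → ℤ} (h₁ : IsBaseSeq (m + 1) m a b c d)
    (h₂ : IsBaseSeq (n + 1) n e f g h) :
    IsBaseSeq ((2 * m + 1) * (2 * n + 1)) ((2 * m + 1) * (2 * n + 1))
      (yangSeq a b c (revSeq id d) e g (-revSeq id f) (-revSeq id h))
      (yangSeq b (revSeq id a) d c f (-revSeq id h) (-e) (revSeq id g))
      (yangSeq (revSeq id b) (revSeq id a) (revSeq id d) c e (-g) f (-h))
      (yangSeq (revSeq id a) b (revSeq id c) (revSeq id d) (revSeq id f) h e (revSeq id g)) := by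
  obtain ⟨ha, hb, hc, hd, hcorr₁⟩ := h₁
  obtain ⟨he, hf, hg, hh, hcorr₂⟩ := h₂
  simp only [← Int.isUnit_iff] at ha hb hc hd he hf hg hh
  refine ⟨fun k => Int.isUnit_iff.mp ?_, fun k => Int.isUnit_iff.mp ?_,
    fun k => Int.isUnit_iff.mp ?_, fun k => Int.isUnit_iff.mp ?_, ?_⟩
  · exact yangSeq_isUnit ha hb hc (fun i => hd i.rev) he hg (fun i => (hf i.rev).neg)
      (fun i => (hh i.rev).neg) k
  · exact yangSeq_isUnit hb (fun i => ha i.rev) hd hc hf (fun i => (hh i.rev).neg)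
      (fun i => (he i).neg) (fun i => hg i.rev) k
  · exact yangSeq_isUnit (fun i => hb i.rev) (fun i => ha i.rev) (fun i => hd i.rev) hc he
      (fun i => (hg i).neg) hf (fun i => (hh i).neg) k
  · exact yangSeq_isUnit (fun i => ha i.rev) hb (fun i => hc i.rev) (fun i => hd i.rev)
      (fun i => hf i.rev) hh he (fun i => hg i.rev) k
  obtain ⟨r₁, hr₁⟩ := (autocorr_sum_eq_zero_iff a b c d).mp hcorr₁
  obtain ⟨r₂, hr₂⟩ := (autocorr_sum_eq_zero_iff e f g h).mp hcorr₂
  refine (autocorr_sum_eq_zero_iff _ _ _ _).mpr ⟨r₁ * r₂, ?_⟩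
  rw [hallNorm_yangSeq, hr₁, hr₂, RingHom.comp_apply, expand_C, expand_C, expand_C, map_mul]

/-- Yang multiplication theorem — if `BS(m+1,m) ≠ ∅` and `BS(n+1,n) ≠ ∅`
then `BS(m',m') ≠ ∅` where `m' = (2m+1)(2n+1)`. -/
theorem stmt15 (m n : ℕ)
    (hBS1 : ∃ (a b : Fin (m + 1) → ℤ) (c d : Fin m → ℤ), IsBaseSeq (m + 1) m a b c d)
    (hBS2 : ∃ (a b : Fin (n + 1) → ℤ) (c d : Fin n → ℤ), IsBaseSeq (n + 1) n a b c d) :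
    ∃ (q r : Fin ((2 * m + 1) * (2 * n + 1)) → ℤ)
      (s t : Fin ((2 * m + 1) * (2 * n + 1)) → ℤ),
      IsBaseSeq ((2 * m + 1) * (2 * n + 1)) ((2 * m + 1) * (2 * n + 1)) q r s t := by
  obtain ⟨a, b, c, d, h₁⟩ := hBS1
  obtain ⟨e, f, g, h, h₂⟩ := hBS2
  exact ⟨_, _, _, _, isBaseSeq_yangSeq h₁ h₂⟩

end
end

section
/- Let Q, R, S, T be the matrices built from interleaved sequences as in the Yang construction: with a' = a/0, b' = b/0, c' = 0/c, d' = 0/d ∈ R^{2n+1} and f' = f/0, g' = g/0, h' = 0/h, e' = 0/e ∈ R^{2m+1}, Q = f'*^t a' + g'^t c' − e'^t b'* + h'^t d', R = f'*^t b' + g'*^t d' + e'^t a'* − h'*^t c', S = g'*^t a' − f'^t c' − h'^t b' − e'^t d'*, T = g'^t b' − f'^t d' + h'*^t a' + e'^t c'*. Then (ψ_Q ψ_Q* + ψ_R ψ_R* + ψ_S ψ_S* + ψ_T ψ_T*)(x, y) = (ψ_a ψ_a* + ψ_b ψ_b* + ψ_c ψ_c* + ψ_d ψ_d*)(x²) ·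 (ψ_e ψ_e* + ψ_f ψ_f* + ψ_g ψ_g* + ψ_h ψ_h*)(y²). -/
noncomputable section
open LaurentPolynomial Finset

variable {R : Type*}

/-!
Taking `ψ` is additive in the matrix and sends a rank-one matrix `u^t v` to `ψ_v(x) ψ_u(y)`.
Reversing and conjugating a sequence turns `ψ` into its image under the involution `*`, and
interleaving with zeros (`a/0`, `0/a`) substitutes `x ↦ x²`, `y ↦ y²`. So `ψ_Q, ψ_R, ψ_S, ψ_T` are
bilinear in `ψ_a(x²), …, ψ_d(x²)`, `ψ_e(y²), …, ψ_h(y²)` and their conjugates, and the theorem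
becomes a four-square identity of Euler type (multiplicativity of a quaternion norm) in a
commutative ring, which `ring` verifies once `f** = f` is used.
-/

open AddMonoidAlgebra

theorem sum_revSeq {M : Type*} [AddCommMonoid M] (F : ℤ → R → M) (τ : R → R)
    {l : ℕ} (a : Fin l → R) :
    ∑ i : Fin l, F (2 * i + 1 - l) (revSeq τ a i) = ∑ i : Fin l, F (-(2 * i + 1 - l)) (τ (a i)) := by
  refine Fintype.sum_equiv Fin.revPerm _ _ fun i => ?_
  rw [revSeq, Fin.revPerm_apply, Fin.val_rev]
  congr 1
  have := i.isLt
  push_cast [Nat.cast_sub (by omega : (i : ℕ) + 1 ≤ l)]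
  ring

section CommRing
variable [CommRing R]

theorem sum_div0 {M : Type*} [AddCommMonoid M] (F : ℤ → R → M) (hF : ∀ z, F z 0 = 0)
    {l : ℕ} (a : Fin (l + 1) → R) :
    ∑ i : Fin (2 * l + 1), F (2 * i + 1 - (2 * l + 1 : ℕ)) (div0 a i)
      = ∑ k : Fin (l + 1), F (2 * (2 * k + 1 - (l + 1 : ℕ))) (a k) := by
  symm
  refine Finset.sum_of_injOn (fun k => ⟨2 * k, by omega⟩) ?_ (by simp) ?_ ?_
  · intro i _ j _ hij
    simp only [Fin.mk.injEq] at hij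
    omega
  · intro i _ hi
    rw [div0, dif_neg, hF]
    intro heven
    exact hi ⟨⟨i / 2, by omega⟩, by simp, Fin.ext (by dsimp only; omega)⟩
  · intro k _
    simp only [div0, Nat.mul_mod_right, dif_pos, Nat.mul_div_cancel_left _ two_pos]
    congr 1
    push_cast
    ring

theorem sum_zdiv {M : Type*} [AddCommMonoid M] (F : ℤ → R → M) (hF : ∀ z, F z 0 = 0)
    {l : ℕ} (a : Fin l → R) :
    ∑ i : Fin (2 * l + 1), F (2 * i + 1 - (2 * l + 1 : ℕ)) (zdiv a i)
      = ∑ k : Fin l, F (2 * (2 * k + 1 - l)) (a k) := by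
  symm
  refine Finset.sum_of_injOn (fun k => ⟨2 * k + 1, by omega⟩) ?_ (by simp) ?_ ?_
  · intro i _ j _ hij
    simp only [Fin.mk.injEq] at hij
    omega
  · intro i _ hi
    rw [zdiv, dif_neg, hF]
    intro hodd
    exact hi ⟨⟨i / 2, by omega⟩, by simp, Fin.ext (by dsimp only; omega)⟩
  · intro k _
    have hk : (2 * (k : ℕ) + 1) % 2 = 1 := by omega
    have hk' : (2 * (k : ℕ) + 1) / 2 = k := by omega
    simp only [zdiv, hk, hk', dif_pos]
    congr 1
    push_cast
    ring

theorem subSq2_single (p : ℤ × ℤ) (r : R) : subSq2 (single p r) = single (2 • p) r := by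
  simp [subSq2]

theorem psiX_div0 {l : ℕ} (a : Fin (l + 1) → R) : psiX (div0 a) = subSq2 (psiX a) := by
  simp only [psiX, map_sum, subSq2_single, Prod.smul_mk, smul_zero]
  exact sum_div0 (fun z r => single (z, 0) r) (fun _ => single_zero _) a

theorem psiX_zdiv {l : ℕ} (a : Fin l → R) : psiX (zdiv a) = subSq2 (psiX a) := by
  simp only [psiX, map_sum, subSq2_single, Prod.smul_mk, smul_zero]
  exact sum_zdiv (fun z r => single (z, 0) r) (fun _ => single_zero _) a

theorem psiY_div0 {l : ℕ} (a : Fin (l + 1) → R) : psiY (div0 a) = subSq2 (psiY a) := by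
  simp only [psiY, map_sum, subSq2_single, Prod.smul_mk, smul_zero]
  exact sum_div0 (fun z r => single (0, z) r) (fun _ => single_zero _) a

theorem psiY_zdiv {l : ℕ} (a : Fin l → R) : psiY (zdiv a) = subSq2 (psiY a) := by
  simp only [psiY, map_sum, subSq2_single, Prod.smul_mk, smul_zero]
  exact sum_zdiv (fun z r => single (0, z) r) (fun _ => single_zero _) a

section Involution
variable (σ : R →+* R)

def lstar2Hom : Laurent2 R →+* Laurent2 R :=
  (mapDomainRingHom R negAddMonoidHom).comp (mapRingHom _ σ)

theorem lstar2Hom_apply (f : Laurent2 R) : lstar2Hom σ f = lstar2 σ f := by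
  ext q
  rw [lstar2Hom, RingHom.comp_apply, mapDomainRingHom_apply]
  simp only [mapDomain, coe_negAddMonoidHom, lstar2, Finsupp.equivMapDomain_apply, Equiv.neg_symm,
    Equiv.neg_apply, Finsupp.mapRange_apply]
  rw [← neg_neg q, Finsupp.mapDomain_apply neg_injective]
  simp

theorem lstar2Hom_single (p : ℤ × ℤ) (r : R) : lstar2Hom σ (single p r) = single (-p) (σ r) := by
  simp [lstar2Hom]

theorem lstar2Hom_lstar2Hom (hσ : Function.Involutive σ) (f : Laurent2 R) :
    lstar2Hom σ (lstar2Hom σ f) = f := by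
  ext q
  simp [lstar2Hom_apply, lstar2, hσ _]

theorem subSq2_lstar2Hom (f : Laurent2 R) : subSq2 (lstar2Hom σ f) = lstar2Hom σ (subSq2 f) := by
  refine RingHom.congr_fun (ringHom_ext (f := subSq2.comp (lstar2Hom σ))
    (g := (lstar2Hom σ).comp subSq2) (fun r => ?_) (fun p => ?_)) f <;>
    simp [lstar2Hom_single, subSq2_single]

theorem psiX_revSeq {l : ℕ} (v : Fin l → R) : psiX (revSeq σ v) = lstar2 σ (psiX v) := by
  simp only [psiX, ← lstar2Hom_apply, map_sum, lstar2Hom_single, Prod.neg_mk, neg_zero]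
  exact sum_revSeq (fun z r => single (z, 0) r) σ v

theorem psiY_revSeq {l : ℕ} (v : Fin l → R) : psiY (revSeq σ v) = lstar2 σ (psiY v) := by
  simp only [psiY, ← lstar2Hom_apply, map_sum, lstar2Hom_single, Prod.neg_mk, neg_zero]
  exact sum_revSeq (fun z r => single (0, z) r) σ v

end Involution

theorem psiX_add {l : ℕ} (u v : Fin l → R) : psiX (u + v) = psiX u + psiX v := by
  simp only [psiX, Pi.add_apply, single_add, sum_add_distrib]

theorem psiX_sub {l : ℕ} (u v : Fin l → R) : psiX (u - v) = psiX u - psiX v := by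
  simp only [psiX, Pi.sub_apply, single_sub, sum_sub_distrib]

theorem psiMat_add {m n : ℕ} (A B : Fin m → Fin n → R) :
    psiMat (A + B) = psiMat A + psiMat B := by
  simp only [psiMat, Pi.add_apply, psiX_add, add_mul, sum_add_distrib]

theorem psiMat_sub {m n : ℕ} (A B : Fin m → Fin n → R) :
    psiMat (A - B) = psiMat A - psiMat B := by
  simp only [psiMat, Pi.sub_apply, psiX_sub, sub_mul, sum_sub_distrib]

theorem psiMat_outer {m n : ℕ} (u : Fin m → R) (v : Fin n → R) :
    psiMat (outer u v) = psiX v * psiY u := by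
  simp only [psiMat, psiX, psiY, Finset.mul_sum, Finset.sum_mul, single_mul_single]
  refine Finset.sum_congr rfl fun i _ => Finset.sum_congr rfl fun j _ => ?_
  simp only [outer, mul_comm, Prod.mk_add_mk, add_zero, zero_add, mul_one]

end CommRing

/-- the two-variable identity for the matrices built from interleaved
sequences in the Yang construction. -/
theorem stmt16 {R : Type*} [CommRing R] (σ : R ≃+* R) (hσ : ∀ r, σ (σ r) = r)
    {m n : ℕ} (a b : Fin (n + 1) → R) (c d : Fin n → R)
    (f g : Fin (m + 1) → R) (h e : Fin m → R) :
    let st : R → R := fun r => σ r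
    let σ' : R →+* R := (σ : R →+* R)
    let a' := div0 a
    let b' := div0 b
    let c' := zdiv c
    let d' := zdiv d
    let f' := div0 f
    let g' := div0 g
    let h' := zdiv h
    let e' := zdiv e
    let Q := outer (revSeq st f') a' + outer g' c' - outer e' (revSeq st b') + outer h' d'
    let R' := outer (revSeq st f') b' + outer (revSeq st g') d' + outer e' (revSeq st a')
                - outer (revSeq st h') c'
    let S := outer (revSeq st g') a' - outer f' c' - outer h' b' - outer e' (revSeq st d')
    let T' := outer g' b' - outer f' d' + outer (revSeq st h') a' + outer e' (revSeq st c')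
    psiMat Q * lstar2 σ' (psiMat Q) + psiMat R' * lstar2 σ' (psiMat R')
        + psiMat S * lstar2 σ' (psiMat S) + psiMat T' * lstar2 σ' (psiMat T')
      = subSq2 (psiX a * lstar2 σ' (psiX a) + psiX b * lstar2 σ' (psiX b)
            + psiX c * lstar2 σ' (psiX c) + psiX d * lstar2 σ' (psiX d))
        * subSq2 (psiY e * lstar2 σ' (psiY e) + psiY f * lstar2 σ' (psiY f)
            + psiY g * lstar2 σ' (psiY g) + psiY h * lstar2 σ' (psiY h)) := by
  intro st σ' a' b' c' d' f' g' h' e' Q R' S T'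
  have hst : st = σ' := rfl
  simp only [Q, R', S, T', a', b', c', d', f', g', h', e', hst, psiMat_add, psiMat_sub,
    psiMat_outer, psiX_revSeq, psiY_revSeq, psiX_div0, psiX_zdiv, psiY_div0, psiY_zdiv]
  simp only [← lstar2Hom_apply, map_add, map_sub, map_mul, lstar2Hom_lstar2Hom σ' hσ,
    subSq2_lstar2Hom]
  ring

end
end
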